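/- arXiv:1006.3339 — 3 statements merged into one kernel-verified Lean document; each statement's English description precedes it below -/
import Mathlib

section
/- For integers $r \geq 1$ and $0 \leq k \leq r-1$, and complex numbers $X, Y$ with $e^X \neq 1$, the residue at $Y=0$ of the function $Y \mapsto e^{kY}/((e^Y-1)^r(e^{X-Y}-1))$ equals $e^{kX}/(e^X-1)^r$. -/
/-!
With `t = exp Y - 1`, `s = exp (X - Y) - 1` and `c = exp X - 1` we have `(t + 1) (s + 1) = c + 1`,
whence the partial fractions
  `1 / (t s) = c⁻¹ (1 + 1 / t + 1 / s)`,
  `1 / (t ^ (n + 2) s) = c⁻¹ ((t + 1) / t ^ (n + 2) + 1 / (t ^ (n + 1) s))`,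
while `exp ((k + 1) Y) = exp (k Y) (t + 1)` splits the case `(k + 1, n + 1)` into the cases
`(k, n + 1)` and `(k, n)`, where `n + 1` is the order of the pole. By induction on `n` and then
on `k`, everything reduces to three facts: `1 / t` has residue `1`, `1 / s` is analytic at `0`,
and `(t + 1) / t ^ (n + 2)` has residue `0`, being a multiple of the derivative of
`t⁻¹ ^ (n + 1)`.
-/

open Complex Filter Topology

theorem iteratedDeriv_pow_mul_zero {𝕜 : Type*} [NontriviallyNormedField 𝕜] {v : 𝕜 → 𝕜}
    {n : ℕ} (hv : ContDiffAt 𝕜 n v 0) (m : ℕ) :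
    iteratedDeriv n (fun y => y ^ m * v y) 0 = n.descFactorial m * iteratedDeriv (n - m) v 0 := by
  rw [iteratedDeriv_fun_mul (by fun_prop) hv]
  simp only [iteratedDeriv_fun_pow_zero, Nat.cast_ite, Nat.cast_zero, mul_ite, ite_mul, mul_zero,
    zero_mul, Finset.sum_ite_eq', Finset.mem_range]
  split_ifs with hm
  · rw [Nat.descFactorial_eq_factorial_mul_choose]; push_cast; ring
  · rw [Nat.descFactorial_eq_zero_iff_lt.mpr (by omega)]; simp

/-- `f Y = g Y / Y ^ (n + 1)` near `0` with `g` analytic, and `v` is the coefficient of `Y ^ n`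
in `g`: `f` has a pole of order at most `n + 1` at `0`, with residue `v`. -/
def HasPoleResidue (n : ℕ) (f : ℂ → ℂ) (v : ℂ) : Prop :=
  ∃ g : ℂ → ℂ, AnalyticAt ℂ g 0 ∧ (∀ᶠ Y in 𝓝[≠] 0, f Y = g Y / Y ^ (n + 1)) ∧
    iteratedDeriv n g 0 / n.factorial = v

namespace HasPoleResidue

variable {n : ℕ} {f f₁ f₂ : ℂ → ℂ} {v v₁ v₂ : ℂ}

theorem congr {f' : ℂ → ℂ} (h : HasPoleResidue n f v) (hf : f' =ᶠ[𝓝[≠] 0] f) :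
    HasPoleResidue n f' v := by
  obtain ⟨g, hg, hfg, hv⟩ := h
  exact ⟨g, hg, hf.trans hfg, hv⟩

theorem add (h₁ : HasPoleResidue n f₁ v₁) (h₂ : HasPoleResidue n f₂ v₂) :
    HasPoleResidue n (fun Y => f₁ Y + f₂ Y) (v₁ + v₂) := by
  obtain ⟨g₁, hg₁, hfg₁, rfl⟩ := h₁
  obtain ⟨g₂, hg₂, hfg₂, rfl⟩ := h₂
  refine ⟨fun Y => g₁ Y + g₂ Y, hg₁.add hg₂, ?_, ?_⟩
  · filter_upwards [hfg₁, hfg₂] with Y e₁ e₂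
    rw [e₁, e₂, add_div]
  · rw [iteratedDeriv_fun_add hg₁.contDiffAt hg₂.contDiffAt, add_div]

theorem const_mul (a : ℂ) (h : HasPoleResidue n f v) :
    HasPoleResidue n (fun Y => a * f Y) (a * v) := by
  obtain ⟨g, hg, hfg, rfl⟩ := h
  refine ⟨fun Y => a * g Y, analyticAt_const.mul hg, ?_, ?_⟩
  · filter_upwards [hfg] with Y e
    rw [e, mul_div_assoc]
  · rw [iteratedDeriv_const_mul_field, mul_div_assoc]

theorem succ (h : HasPoleResidue n f v) : HasPoleResidue (n + 1) f v := by
  obtain ⟨g, hg, hfg, rfl⟩ := h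
  refine ⟨fun Y => Y ^ 1 * g Y, by fun_prop, ?_, ?_⟩
  · filter_upwards [hfg, self_mem_nhdsWithin] with Y e (hY : Y ≠ 0)
    rw [e]
    field_simp
    ring
  · rw [iteratedDeriv_pow_mul_zero hg.contDiffAt, Nat.descFactorial_one, Nat.add_sub_cancel,
      Nat.factorial_succ]
    push_cast
    field_simp

end HasPoleResidue

theorem AnalyticAt.hasPoleResidue_zero {f : ℂ → ℂ} (hf : AnalyticAt ℂ f 0) (n : ℕ) :
    HasPoleResidue n f 0 := by
  refine ⟨fun Y => Y ^ (n + 1) * f Y, by fun_prop, ?_, ?_⟩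
  · filter_upwards [self_mem_nhdsWithin] with Y (hY : Y ≠ 0)
    rw [mul_div_cancel_left₀ _ (pow_ne_zero _ hY)]
  · rw [iteratedDeriv_pow_mul_zero hf.contDiffAt,
      Nat.descFactorial_eq_zero_iff_lt.mpr (Nat.lt_succ_self n)]
    simp

theorem hasPoleResidue_deriv {n : ℕ} {F u : ℂ → ℂ} (hu : AnalyticAt ℂ u 0)
    (hF : ∀ᶠ Y in 𝓝[≠] 0, F Y = u Y / Y ^ (n + 1)) :
    HasPoleResidue (n + 1) (deriv F) 0 := by
  have hu' : AnalyticAt ℂ (deriv u) 0 := hu.deriv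
  refine ⟨fun Y => Y ^ 1 * deriv u Y - (n + 1) * u Y, by fun_prop, ?_, ?_⟩
  · have hFY : ∀ᶠ Y in 𝓝[≠] 0, F =ᶠ[𝓝 Y] fun z => u z / z ^ (n + 1) := by
      filter_upwards [eventually_eventually_nhdsWithin.mpr hF, self_mem_nhdsWithin]
        with Y hY (hY0 : Y ≠ 0)
      rwa [← isOpen_compl_singleton.nhdsWithin_eq hY0]
    filter_upwards [hFY, self_mem_nhdsWithin, hu.eventually_analyticAt.filter_mono
      nhdsWithin_le_nhds] with Y hFY (hY : Y ≠ 0) huY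
    rw [hFY.deriv_eq, deriv_fun_div huY.differentiableAt (differentiableAt_pow _)
      (pow_ne_zero _ hY), deriv_pow_field]
    field_simp
    push_cast
    ring
  · have h₁ : AnalyticAt ℂ (fun Y => Y ^ 1 * deriv u Y) 0 := by fun_prop
    have h₂ : AnalyticAt ℂ (fun Y => (n + 1) * u Y) 0 := by fun_prop
    rw [iteratedDeriv_fun_sub h₁.contDiffAt h₂.contDiffAt,
      iteratedDeriv_pow_mul_zero hu'.contDiffAt,
      iteratedDeriv_const_mul_field, Nat.descFactorial_one, Nat.add_sub_cancel,
      ← iteratedDeriv_succ']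
    push_cast
    ring

/-- `(exp z - 1) / z`, with its limit `1` at `z = 0`. -/
noncomputable def expSubOneDiv : ℂ → ℂ := dslope (fun z => exp z - 1) 0

theorem analyticAt_expSubOneDiv : AnalyticAt ℂ expSubOneDiv 0 := by
  obtain ⟨p, hp⟩ : AnalyticAt ℂ (fun z => exp z - 1) 0 := by fun_prop
  exact ⟨_, hp.has_fpower_series_dslope_fslope⟩

theorem expSubOneDiv_zero : expSubOneDiv 0 = 1 := by
  rw [expSubOneDiv, dslope_same, deriv_sub_const, Complex.deriv_exp, exp_zero]

theorem exp_sub_one_eq_mul_expSubOneDiv (Y : ℂ) : exp Y - 1 = Y * expSubOneDiv Y := by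
  simpa [expSubOneDiv] using (sub_smul_dslope (fun z => exp z - 1) 0 Y).symm

theorem eventually_exp_sub_one_ne_zero : ∀ᶠ Y in 𝓝[≠] (0 : ℂ), exp Y - 1 ≠ 0 := by
  have hD : ∀ᶠ Y in 𝓝 (0 : ℂ), expSubOneDiv Y ≠ 0 :=
    analyticAt_expSubOneDiv.continuousAt.eventually_ne (by simp [expSubOneDiv_zero])
  filter_upwards [nhdsWithin_le_nhds hD, self_mem_nhdsWithin] with Y hDY (hY : Y ≠ 0)
  rw [exp_sub_one_eq_mul_expSubOneDiv]
  exact mul_ne_zero hY hDY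

theorem analyticAt_inv_expSubOneDiv : AnalyticAt ℂ (fun Y => (expSubOneDiv Y)⁻¹) 0 :=
  analyticAt_expSubOneDiv.inv (by simp [expSubOneDiv_zero])

theorem inv_exp_sub_one_pow (m : ℕ) (Y : ℂ) :
    ((exp Y - 1) ^ m)⁻¹ = (expSubOneDiv Y)⁻¹ ^ m / Y ^ m := by
  rw [exp_sub_one_eq_mul_expSubOneDiv, mul_pow, mul_inv, inv_pow, div_eq_mul_inv, mul_comm]

theorem hasPoleResidue_inv_exp_sub_one : HasPoleResidue 0 (fun Y => (exp Y - 1)⁻¹) 1 := by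
  refine ⟨fun Y => (expSubOneDiv Y)⁻¹, analyticAt_inv_expSubOneDiv, ?_, ?_⟩
  · filter_upwards with Y
    simpa using inv_exp_sub_one_pow 1 Y
  · simp [expSubOneDiv_zero]

theorem hasPoleResidue_exp_div_exp_sub_one_pow (n : ℕ) :
    HasPoleResidue (n + 1) (fun Y => exp Y / (exp Y - 1) ^ (n + 2)) 0 := by
  have hderiv : ∀ᶠ Y in 𝓝[≠] (0 : ℂ), deriv (fun Y => ((exp Y - 1) ^ (n + 1))⁻¹) Y
      = -(n + 1) * (exp Y / (exp Y - 1) ^ (n + 2)) := by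
    filter_upwards [eventually_exp_sub_one_ne_zero] with Y hY
    have hd : DifferentiableAt ℂ (fun Y => (exp Y - 1) ^ (n + 1)) Y := by fun_prop
    rw [deriv_fun_inv'' hd (pow_ne_zero _ hY), deriv_fun_pow (by fun_prop), deriv_sub_const,
      Complex.deriv_exp]
    field_simp
    push_cast
    ring
  have h := (hasPoleResidue_deriv (analyticAt_inv_expSubOneDiv.pow (n + 1))
    (.of_forall (inv_exp_sub_one_pow (n + 1)))).const_mul (-(n + 1 : ℂ))⁻¹
  rw [mul_zero] at h
  refine h.congr ?_
  filter_upwards [hderiv] with Y hY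
  rw [hY, ← mul_assoc, inv_mul_cancel₀ (by norm_cast), one_mul]

section

variable {X : ℂ}

theorem eventually_exp_sub_sub_one_ne_zero (hX : exp X ≠ 1) :
    ∀ᶠ Y in 𝓝 (0 : ℂ), exp (X - Y) - 1 ≠ 0 :=
  ContinuousAt.eventually_ne (by fun_prop) (by simpa [sub_eq_zero] using hX)

theorem hasPoleResidue_inv_exp_sub_one_pow_mul (hX : exp X ≠ 1) (n : ℕ) :
    HasPoleResidue n (fun Y => 1 / ((exp Y - 1) ^ (n + 1) * (exp (X - Y) - 1)))
      (1 / (exp X - 1) ^ (n + 1)) := by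
  have hcY (Y : ℂ) : exp Y * exp (X - Y) = exp X := by rw [← exp_add, add_sub_cancel]
  induction n with
  | zero =>
    have hinv : AnalyticAt ℂ (fun Y => (exp (X - Y) - 1)⁻¹) 0 := by
      fun_prop (disch := simpa [sub_eq_zero] using hX)
    have h := ((((analyticAt_const (v := 1)).hasPoleResidue_zero 0).add
      hasPoleResidue_inv_exp_sub_one).add (hinv.hasPoleResidue_zero 0)).const_mul (exp X - 1)⁻¹
    rw [zero_add, add_zero, mul_one, ← one_div, ← pow_one (exp X - 1)] at h
    refine h.congr ?_
    filter_upwards [eventually_exp_sub_one_ne_zero,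
      nhdsWithin_le_nhds (eventually_exp_sub_sub_one_ne_zero hX)] with Y ht hs
    field_simp
    linear_combination (1 - exp Y) * hcY Y
  | succ n ih =>
    have h := ((hasPoleResidue_exp_div_exp_sub_one_pow n).add ih.succ).const_mul (exp X - 1)⁻¹
    rw [zero_add, ← div_eq_inv_mul, div_div, ← pow_succ] at h
    refine h.congr ?_
    filter_upwards [eventually_exp_sub_one_ne_zero,
      nhdsWithin_le_nhds (eventually_exp_sub_sub_one_ne_zero hX)] with Y ht hs
    field_simp
    linear_combination -(exp Y - 1) ^ (n + 1) * hcY Y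

theorem exp_natCast_succ_mul (k : ℕ) (Y : ℂ) :
    exp ((k + 1 : ℕ) * Y) = exp (k * Y) * exp Y := by
  rw [Nat.cast_succ, add_one_mul, exp_add]

theorem hasPoleResidue_exp_mul_div (hX : exp X ≠ 1) {k n : ℕ} (hk : k ≤ n) :
    HasPoleResidue n (fun Y => exp (k * Y) / ((exp Y - 1) ^ (n + 1) * (exp (X - Y) - 1)))
      (exp (k * X) / (exp X - 1) ^ (n + 1)) := by
  induction k generalizing n with
  | zero => simpa only [CharP.cast_eq_zero, zero_mul, exp_zero] using
      hasPoleResidue_inv_exp_sub_one_pow_mul hX n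
  | succ k ih =>
    obtain ⟨m, rfl⟩ := Nat.exists_eq_add_one.mpr (Nat.zero_lt_of_lt hk)
    have h := (ih (n := m + 1) (by omega)).add (ih (n := m) (by omega)).succ
    rw [show exp (k * X) / (exp X - 1) ^ (m + 1 + 1) + exp (k * X) / (exp X - 1) ^ (m + 1)
        = exp ((k + 1 : ℕ) * X) / (exp X - 1) ^ (m + 1 + 1) by
      rw [exp_natCast_succ_mul]; field_simp; ring] at h
    refine h.congr ?_
    filter_upwards [eventually_exp_sub_one_ne_zero,
      nhdsWithin_le_nhds (eventually_exp_sub_sub_one_ne_zero hX)] with Y ht hs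
    rw [exp_natCast_succ_mul]
    field_simp
    ring

end

theorem residue_exp_quotient (r k : ℕ) (hr : 1 ≤ r) (hk : k ≤ r - 1) (X : ℂ)
    (hX : Complex.exp X ≠ 1) :
    ∃ g : ℂ → ℂ, AnalyticAt ℂ g 0 ∧
      (∀ᶠ Y in nhdsWithin (0 : ℂ) {0}ᶜ,
        Complex.exp (k * Y) / ((Complex.exp Y - 1) ^ r * (Complex.exp (X - Y) - 1))
          = g Y / Y ^ r) ∧
      iteratedDeriv (r - 1) g 0 / (Nat.factorial (r - 1) : ℂ)
        = Complex.exp (k * X) / (Complex.exp X - 1) ^ r := by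
  obtain ⟨n, rfl⟩ := Nat.exists_eq_add_one.mpr hr
  exact hasPoleResidue_exp_mul_div hX hk
end

section
/- For $\alpha \in \mathbb{R} \setminus \mathbb{Z}$ and $\beta \in \mathbb{C} \setminus \mathbb{Z}$, the symmetric limit $\lim_{N\to\infty} \sum_{n=-N}^{N} e^{2\pi i n \alpha}/(\beta+n)$ exists and equals $2\pi i \, e^{2\pi i \beta(1-\{\alpha\})}/(e^{2\pi i \beta}-1)$, where $\{\alpha\}$ denotes the fractional part of $\alpha$. -/
/-!
Write `e(x) = exp(2πix)` and `D_N(t) = ∑_{|n| ≤ N} e(nt)` for the Dirichlet kernel. Since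
`e(β + n) = e(β)`, we have `∫₀¹ e(βy) e(n(y + α)) dy = e(nα) (e(β) - 1) / (2πi(β + n))`, so the
symmetric partial sum is `2πi / (e(β) - 1) · ∫₀¹ e(βy) D_N(y + α) dy`, while
`∫₀¹ D_N(y + α) dy = 1`.
On `[0, 1]` the kernel is singular only at `y₀ = 1 - {α}`, where `y₀ + α ∈ ℤ`; there the
singularity of `(e(βy) - e(βy₀)) / (e(y + α) - 1)` is removable, and
`D_N(t) (e(t) - 1) = e((N + 1)t) - e(-Nt)`. Hence the partial sum minus
`2πi e(βy₀) / (e(β) - 1)` is a difference of Fourier coefficients of a continuous function at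
frequencies `N + 1` and `-N`, which tends to `0` by the Riemann–Lebesgue lemma.
-/

open Complex Filter MeasureTheory Set Topology FourierTransform
open scoped Real

theorem Int.sum_Icc_sub {M : Type*} [AddCommGroup M] (f : ℤ → M) {a b : ℤ} (h : a ≤ b + 1) :
    ∑ n ∈ Finset.Icc a b, (f (n + 1) - f n) = f (b + 1) - f a := by
  replace h : a - 1 ≤ b := by omega
  induction b, h using Int.leInduction with
  | base => simp [Finset.Icc_eq_empty_of_lt]
  | succ b hb ih =>
    rw [← Finset.insert_Icc_right_eq_Icc_add_one (by omega), Finset.sum_insert (by simp), ih]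
    abel

noncomputable def dirichletKernel (N : ℕ) (t : ℝ) : ℂ :=
  ∑ n ∈ Finset.Icc (-(N : ℤ)) N, exp (2 * π * I * n * t)

@[fun_prop]
theorem continuous_dirichletKernel (N : ℕ) : Continuous (dirichletKernel N) := by
  unfold dirichletKernel; fun_prop

theorem dirichletKernel_mul_exp_sub_one (N : ℕ) (t : ℝ) :
    dirichletKernel N t * (exp (2 * π * I * t) - 1) =
      exp (2 * π * I * (N + 1 : ℝ) * t) - exp (2 * π * I * (-N : ℝ) * t) := by
  have hstep : ∀ n : ℤ, exp (2 * π * I * n * t) * (exp (2 * π * I * t) - 1) =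
      exp (2 * π * I * (n + 1 : ℤ) * t) - exp (2 * π * I * n * t) := fun n => by
    rw [mul_sub, ← exp_add]; push_cast; ring_nf
  rw [dirichletKernel, Finset.sum_mul, Finset.sum_congr rfl fun n _ => hstep n,
    Int.sum_Icc_sub (fun n : ℤ => exp (2 * π * I * n * t)) (by omega)]
  push_cast; rfl

theorem integral_exp_two_pi_I_mul {z : ℂ} (hz : z ≠ 0) :
    ∫ y in (0 : ℝ)..1, exp (2 * π * I * z * y) = (exp (2 * π * I * z) - 1) / (2 * π * I * z) := by
  rw [integral_exp_mul_complex (mul_ne_zero two_pi_I_ne_zero hz)]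
  simp

theorem integral_exp_two_pi_I_int_mul {n : ℤ} (hn : n ≠ 0) (t : ℝ) :
    ∫ y in (0 : ℝ)..1, exp (2 * π * I * n * (y + t)) = 0 := by
  have h : ∀ y : ℝ, exp (2 * π * I * n * (y + t)) =
      exp (2 * π * I * n * t) * exp (2 * π * I * n * y) := fun y => by
    rw [← exp_add]; ring_nf
  simp_rw [h, intervalIntegral.integral_const_mul,
    integral_exp_two_pi_I_mul (Int.cast_ne_zero.mpr hn), mul_comm _ (n : ℂ),
    exp_int_mul_two_pi_mul_I]
  simp

theorem integral_dirichletKernel (N : ℕ) (t : ℝ) :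
    ∫ y in (0 : ℝ)..1, dirichletKernel N (y + t) = 1 := by
  simp_rw [dirichletKernel, ofReal_add]
  rw [intervalIntegral.integral_finsetSum fun n _ =>
      Continuous.intervalIntegrable (by fun_prop) 0 1,
    Finset.sum_eq_single_of_mem 0 (by simp) fun n _ hn => integral_exp_two_pi_I_int_mul hn t]
  simp

theorem integral_exp_mul_dirichletKernel {z : ℂ} (hz : ∀ n : ℤ, z + n ≠ 0) (N : ℕ) (t : ℝ) :
    ∫ y in (0 : ℝ)..1, exp (2 * π * I * z * y) * dirichletKernel N (y + t) =
      (exp (2 * π * I * z) - 1) / (2 * π * I) *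
        ∑ n ∈ Finset.Icc (-(N : ℤ)) N, exp (2 * π * I * n * t) / (z + n) := by
  have hterm : ∀ n : ℤ,
      ∫ y in (0 : ℝ)..1, exp (2 * π * I * z * y) * exp (2 * π * I * n * ↑(y + t)) =
        (exp (2 * π * I * z) - 1) / (2 * π * I) * (exp (2 * π * I * n * t) / (z + n)) := by
    intro n
    have h : ∀ y : ℝ, exp (2 * π * I * z * y) * exp (2 * π * I * n * ↑(y + t)) =
        exp (2 * π * I * n * t) * exp (2 * π * I * (z + n) * y) := fun y => by
      rw [← exp_add, ← exp_add]; push_cast; ring_nf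
    have hper : exp (2 * π * I * (z + n)) = exp (2 * π * I * z) := by
      rw [mul_add, exp_add, mul_comm _ (n : ℂ), exp_int_mul_two_pi_mul_I, mul_one]
    simp_rw [h, intervalIntegral.integral_const_mul, integral_exp_two_pi_I_mul (hz n), hper]
    field_simp [hz n, two_pi_I_ne_zero]
  simp_rw [dirichletKernel, Finset.mul_sum]
  rw [intervalIntegral.integral_finsetSum fun n _ =>
    Continuous.intervalIntegrable (by fun_prop) 0 1]
  exact Finset.sum_congr rfl fun n _ => hterm n

theorem tendsto_setIntegral_mul_exp_cocompact (G : ℝ → ℂ) {s : Set ℝ} (hs : MeasurableSet s) :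
    Tendsto (fun w : ℝ => ∫ y in s, G y * exp (2 * π * I * w * y)) (cocompact ℝ) (𝓝 0) := by
  have hfourier : ∀ w : ℝ, ∫ y in s, G y * exp (2 * π * I * w * y) = 𝓕 (s.indicator G) (-w) := by
    intro w
    rw [Real.fourier_real_eq_integral_exp_smul, ← integral_indicator hs]
    congr 1 with y
    by_cases hy : y ∈ s
    · simp only [indicator_of_mem hy, smul_eq_mul]
      push_cast; ring_nf
    · simp [indicator_of_notMem hy]
  simp_rw [hfourier]
  exact (Real.zero_at_infty_fourier _).comp (Homeomorph.neg ℝ).toCocompactMap.cocompact_tendsto'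

theorem tendsto_intervalIntegral_mul_exp_cocompact (G : ℝ → ℂ) (a b t : ℝ) :
    Tendsto (fun w : ℝ => ∫ y in a..b, G y * exp (2 * π * I * w * (y + t)))
      (cocompact ℝ) (𝓝 0) := by
  have hnorm : ∀ w : ℝ, ‖∫ y in a..b, G y * exp (2 * π * I * w * (y + t))‖ =
      ‖∫ y in uIoc a b, G y * exp (2 * π * I * w * y)‖ := by
    intro w
    have h : ∀ y : ℝ, G y * exp (2 * π * I * w * (y + t)) =
        exp (2 * π * I * w * t) * (G y * exp (2 * π * I * w * y)) := fun y => by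
      rw [mul_left_comm, ← exp_add]; ring_nf
    have hunit : ‖exp (2 * π * I * w * t)‖ = 1 := by
      rw [← Complex.norm_exp_ofReal_mul_I (2 * π * w * t)]; push_cast; ring_nf
    simp_rw [h, intervalIntegral.integral_const_mul, norm_mul, hunit, one_mul,
      intervalIntegral.norm_integral_eq_norm_integral_uIoc]
  rw [tendsto_zero_iff_norm_tendsto_zero]
  simp_rw [hnorm, ← tendsto_zero_iff_norm_tendsto_zero]
  exact tendsto_setIntegral_mul_exp_cocompact G measurableSet_uIoc

theorem tendsto_intervalIntegral_mul_dirichletKernel {G : ℝ → ℂ} {a b : ℝ}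
    (hG : IntervalIntegrable G volume a b) (t : ℝ) :
    Tendsto (fun N : ℕ => ∫ y in a..b,
      G y * (exp (2 * π * I * (y + t)) - 1) * dirichletKernel N (y + t)) atTop (𝓝 0) := by
  have hsplit : ∀ (N : ℕ) (y : ℝ),
      G y * (exp (2 * π * I * (y + t)) - 1) * dirichletKernel N (y + t) =
        G y * exp (2 * π * I * (N + 1 : ℝ) * (y + t)) -
          G y * exp (2 * π * I * (-N : ℝ) * (y + t)) := by
    intro N y
    have hkernel := dirichletKernel_mul_exp_sub_one N (y + t)
    push_cast at hkernel ⊢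
    rw [mul_assoc, mul_comm (_ - 1), hkernel, mul_sub]
  have hint : ∀ w : ℝ,
      IntervalIntegrable (fun y => G y * exp (2 * π * I * w * (y + t))) volume a b :=
    fun w => hG.mul_continuousOn (by fun_prop)
  simp_rw [hsplit, intervalIntegral.integral_sub (hint _) (hint _)]
  have hup : Tendsto (fun N : ℕ => (N + 1 : ℝ)) atTop (cocompact ℝ) := by
    rw [cocompact_eq_atBot_atTop]
    exact (tendsto_atTop_add_const_right _ 1 tendsto_natCast_atTop_atTop).mono_right le_sup_right
  have hdown : Tendsto (fun N : ℕ => (-N : ℝ)) atTop (cocompact ℝ) := by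
    rw [cocompact_eq_atBot_atTop]
    exact (tendsto_neg_atTop_atBot.comp tendsto_natCast_atTop_atTop).mono_right le_sup_left
  have hRL := tendsto_intervalIntegral_mul_exp_cocompact G a b t
  simpa using (hRL.comp hup).sub (hRL.comp hdown)

theorem dslope_exp_two_pi_I_ne_zero {u : ℝ} (hu : u ∈ Ioo (-1) 1) :
    dslope (fun z : ℂ => exp (2 * π * I * z)) 0 u ≠ 0 := by
  rcases eq_or_ne u 0 with rfl | hu0
  · have hderiv : HasDerivAt (fun z : ℂ => exp (2 * π * I * z)) (2 * π * I) 0 := by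
      simpa using ((hasDerivAt_id (0 : ℂ)).const_mul (2 * π * I)).cexp
    rw [ofReal_zero, dslope_same, hderiv.deriv]
    exact two_pi_I_ne_zero
  · rw [dslope_of_ne _ (ofReal_ne_zero.mpr hu0), slope_def_module]
    refine smul_ne_zero (by simpa using hu0) ?_
    rw [mul_zero, exp_zero, sub_ne_zero, Ne, exp_eq_one_iff]
    rintro ⟨n, hn⟩
    have hun : u = n := by
      exact_mod_cast mul_left_cancel₀ two_pi_I_ne_zero (hn.trans (mul_comm _ _))
    rw [hun, mem_Ioo] at hu
    have hn0 : n = 0 := by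
      have h1 : (-1 : ℤ) < n := by exact_mod_cast hu.1
      have h2 : n < 1 := by exact_mod_cast hu.2
      omega
    exact hu0 (by simp [hun, hn0])

theorem exists_continuousOn_exp_mul_sub_one_eq (β : ℂ) :
    ∃ H : ℝ → ℂ, ContinuousOn H (Ioo (-1) 1) ∧
      ∀ u ∈ Ioo (-1 : ℝ) 1, exp (2 * π * I * β * u) - 1 = H u * (exp (2 * π * I * u) - 1) := by
  set E : ℂ → ℂ := fun z => exp (2 * π * I * z)
  have hE : Continuous (dslope E 0) :=
    continuousOn_univ.mp ((Complex.differentiableOn_dslope univ_mem).mpr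
      (by fun_prop : Differentiable ℂ E).differentiableOn).continuousOn
  refine ⟨fun u => β * dslope E 0 (β * u) / dslope E 0 u,
    ContinuousOn.div (by fun_prop) (by fun_prop) fun u hu => dslope_exp_two_pi_I_ne_zero hu,
    fun u hu => ?_⟩
  have hslope : ∀ z : ℂ, z * dslope E 0 z = exp (2 * π * I * z) - 1 := fun z => by
    simpa [E] using sub_smul_dslope E 0 z
  have hne : dslope E 0 u ≠ 0 := dslope_exp_two_pi_I_ne_zero hu
  rw [mul_assoc _ β, ← hslope, ← hslope]
  field_simp

theorem exists_intervalIntegrable_exp_sub_exp_eq (β : ℂ) {α : ℝ} (hα : 0 < Int.fract α) :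
    ∃ G : ℝ → ℂ, IntervalIntegrable G volume 0 1 ∧ ∀ y ∈ uIcc (0 : ℝ) 1,
      exp (2 * π * I * β * y) - exp (2 * π * I * β * (1 - Int.fract α)) =
        G y * (exp (2 * π * I * (y + α)) - 1) := by
  obtain ⟨H, hH, hHeq⟩ := exists_continuousOn_exp_mul_sub_one_eq β
  set y₀ := 1 - Int.fract α with hy₀
  have hmaps : MapsTo (fun y => y - y₀) (uIcc 0 1) (Ioo (-1) 1) := by
    intro y hy
    rw [uIcc_of_le zero_le_one] at hy
    constructor <;> linarith [Int.fract_lt_one α, hy.1, hy.2]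
  refine ⟨fun y => exp (2 * π * I * β * (1 - Int.fract α)) * H (y - y₀),
    (continuousOn_const.mul (hH.comp (by fun_prop) hmaps)).intervalIntegrable, fun y hy => ?_⟩
  have hper : exp (2 * π * I * (y + α)) = exp (2 * π * I * (y - y₀ : ℝ)) := by
    rw [show (2 * π * I * (y + α) : ℂ) = 2 * π * I * (y - y₀ : ℝ) + (⌊α⌋ + 1 : ℤ) * (2 * π * I) by
      rw [hy₀, ← Int.self_sub_floor]; push_cast; ring, exp_add, exp_int_mul_two_pi_mul_I, mul_one]
  have hsplit : exp (2 * π * I * β * y) =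
      exp (2 * π * I * β * (1 - Int.fract α)) * exp (2 * π * I * β * (y - y₀ : ℝ)) := by
    rw [← exp_add, hy₀]; push_cast; ring_nf
  rw [hper, hsplit]
  linear_combination exp (2 * π * I * β * (1 - Int.fract α)) * hHeq _ (hmaps hy)

theorem symmetric_sum_limit (α : ℝ) (hα : ∀ n : ℤ, α ≠ n) (β : ℂ) (hβ : ∀ n : ℤ, β ≠ n) :
    Tendsto (fun N : ℕ => ∑ n ∈ Finset.Icc (-(N : ℤ)) (N : ℤ),
        Complex.exp (2 * Real.pi * Complex.I * n * α) / (β + n)) atTop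
      (nhds (2 * Real.pi * Complex.I *
        Complex.exp (2 * Real.pi * Complex.I * β * (1 - Int.fract α)) /
        (Complex.exp (2 * Real.pi * Complex.I * β) - 1))) := by
  have hβn : ∀ n : ℤ, β + n ≠ 0 := fun n h => hβ (-n) (by push_cast; linear_combination h)
  have hc : exp (2 * π * I * β) - 1 ≠ 0 := by
    rw [sub_ne_zero, Ne, exp_eq_one_iff]
    rintro ⟨n, hn⟩
    exact hβ n (mul_left_cancel₀ two_pi_I_ne_zero (by linear_combination hn))
  obtain ⟨G, hG, hfactor⟩ :=
    exists_intervalIntegrable_exp_sub_exp_eq β (Int.fract_pos.mpr (hα ⌊α⌋))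
  have hdiff : ∀ N : ℕ, ∑ n ∈ Finset.Icc (-(N : ℤ)) N, exp (2 * π * I * n * α) / (β + n) -
      2 * π * I * exp (2 * π * I * β * (1 - Int.fract α)) / (exp (2 * π * I * β) - 1) =
      2 * π * I / (exp (2 * π * I * β) - 1) *
        ∫ y in (0 : ℝ)..1, G y * (exp (2 * π * I * (y + α)) - 1) * dirichletKernel N (y + α) := by
    intro N
    rw [intervalIntegral.integral_congr fun y hy =>
      congrArg (· * dirichletKernel N (y + α)) (hfactor y hy).symm]
    simp_rw [sub_mul]
    rw [intervalIntegral.integral_sub (Continuous.intervalIntegrable (by fun_prop) _ _)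
        (Continuous.intervalIntegrable (by fun_prop) _ _),
      intervalIntegral.integral_const_mul, integral_exp_mul_dirichletKernel hβn,
      integral_dirichletKernel]
    generalize (∑ n ∈ Finset.Icc (-(N : ℤ)) N, exp (2 * π * I * n * α) / (β + n)) = S
    field_simp
  rw [← tendsto_sub_nhds_zero_iff]
  simpa [hdiff] using (tendsto_intervalIntegral_mul_dirichletKernel hG α).const_mul
    (2 * π * I / (exp (2 * π * I * β) - 1))
end

section
/- Let $\alpha \in \mathbb{R} \setminus \mathbb{Z}$. Then there exists a constant $c = c(\alpha) > 0$ such that for all positive integers $N$ and all $\beta \in \mathbb{C}$ with $\mathrm{Im}\,\beta \neq 0$, one has $\left| \sum_{n=-N}^{N} e^{2\pi i n \alpha}/(\beta+n) \right| \leq c/|\mathrm{Im}\,\beta|$. -/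
open Complex Filter

/-!
Abel summation against the partial sums of `n ↦ exp (2πinα)`, which are geometric sums bounded
by `2 / ‖exp (2πiα) - 1‖` since `α ∉ ℤ`, reduces the bound to the total variation of
`n ↦ (β + n)⁻¹`. Each increment `‖(β + n + 1)⁻¹ - (β + n)⁻¹‖ = 1 / (‖β + n‖ * ‖β + n + 1‖)` is at most
`1 / |β.im|` times the angle that the segment `[β + n, β + n + 1]` subtends at `0`, and these
angles add up to less than `π`.
-/

open Finset

theorem Real.div_sqrt_mul_sqrt_le_arctan_sub_arctan {p q : ℝ} (hpq : p ≤ q) :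
    (q - p) / (√(1 + p ^ 2) * √(1 + q ^ 2)) ≤ Real.arctan q - Real.arctan p := by
  have hsin : Real.sin (Real.arctan q - Real.arctan p)
      = (q - p) / (√(1 + p ^ 2) * √(1 + q ^ 2)) := by
    rw [Real.sin_sub, Real.sin_arctan, Real.cos_arctan, Real.sin_arctan, Real.cos_arctan]
    field_simp
  rw [← hsin]
  exact Real.sin_le (sub_nonneg.2 (Real.arctan_strictMono.monotone hpq))

theorem Complex.norm_eq_abs_im_mul_sqrt {z : ℂ} (hz : z.im ≠ 0) :
    ‖z‖ = |z.im| * √(1 + (z.re / |z.im|) ^ 2) := by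
  have hs : 0 < |z.im| := abs_pos.2 hz
  rw [norm_def, normSq_apply]
  nth_rw 1 [← Real.sqrt_sq hs.le]
  rw [← Real.sqrt_mul (sq_nonneg _)]
  congr 1
  field_simp
  rw [sq_abs]
  ring

theorem Complex.norm_inv_add_ofReal_sub_inv_le {z : ℂ} (hz : z.im ≠ 0) {t : ℝ} (ht : 0 ≤ t) :
    ‖(z + t)⁻¹ - z⁻¹‖ ≤
      (Real.arctan ((z.re + t) / |z.im|) - Real.arctan (z.re / |z.im|)) / |z.im| := by
  have hs : 0 < |z.im| := abs_pos.2 hz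
  have hzt : (z + t).im ≠ 0 := by simpa using hz
  have hdiff : (z + t)⁻¹ - z⁻¹ = -(t / (z * (z + t))) := by
    have hz0 : z ≠ 0 := fun h ↦ hz (by rw [h, zero_im])
    have hzt0 : z + t ≠ 0 := fun h ↦ hzt (by rw [h, zero_im])
    field_simp
    ring
  have hqp : (z.re + t) / |z.im| - z.re / |z.im| = t / |z.im| := by ring
  have harctan := Real.div_sqrt_mul_sqrt_le_arctan_sub_arctan
    (div_le_div_of_nonneg_right (le_add_of_nonneg_right (a := z.re) ht) hs.le)
  rw [hqp] at harctan
  rw [hdiff, norm_neg, norm_div, norm_mul, norm_eq_abs_im_mul_sqrt hz, norm_eq_abs_im_mul_sqrt hzt]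
  simp only [add_im, ofReal_im, add_zero, add_re, ofReal_re, norm_real, Real.norm_eq_abs,
    abs_of_nonneg ht]
  calc t / (|z.im| * √(1 + (z.re / |z.im|) ^ 2) * (|z.im| * √(1 + ((z.re + t) / |z.im|) ^ 2)))
      = t / |z.im| / (√(1 + (z.re / |z.im|) ^ 2) * √(1 + ((z.re + t) / |z.im|) ^ 2)) / |z.im| := by
        field_simp
    _ ≤ _ := by gcongr

theorem Complex.norm_inv_le_inv_abs_im {z : ℂ} (hz : z.im ≠ 0) : ‖z⁻¹‖ ≤ |z.im|⁻¹ := by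
  rw [norm_inv]
  exact inv_anti₀ (abs_pos.2 hz) (abs_im_le_norm z)

theorem Complex.sum_range_norm_inv_add_succ_sub_inv_le {z : ℂ} (hz : z.im ≠ 0) (n : ℕ) :
    ∑ k ∈ range n, ‖(z + (k + 1 : ℕ))⁻¹ - (z + k)⁻¹‖ ≤ Real.pi / |z.im| := by
  set G : ℕ → ℝ := fun k ↦ Real.arctan ((z.re + k) / |z.im|)
  have hstep (k : ℕ) : ‖(z + (k + 1 : ℕ))⁻¹ - (z + k)⁻¹‖ ≤ (G (k + 1) - G k) / |z.im| := by
    have h := norm_inv_add_ofReal_sub_inv_le (z := z + k) (by simpa using hz) zero_le_one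
    simp only [add_im, natCast_im, add_zero, add_re, natCast_re, ofReal_one] at h
    simpa [G, add_assoc] using h
  calc ∑ k ∈ range n, ‖(z + (k + 1 : ℕ))⁻¹ - (z + k)⁻¹‖
      ≤ ∑ k ∈ range n, (G (k + 1) - G k) / |z.im| := sum_le_sum fun k _ ↦ hstep k
    _ = (G n - G 0) / |z.im| := by rw [← sum_div, sum_range_sub]
    _ ≤ Real.pi / |z.im| := by
        gcongr
        have h₁ := Real.arctan_lt_pi_div_two ((z.re + n) / |z.im|)
        have h₀ := Real.neg_pi_div_two_lt_arctan ((z.re + (0 : ℕ)) / |z.im|)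
        simp only [G]
        linarith

theorem norm_geom_sum_le {K : Type*} [NormedField K] {e : K} (he : ‖e‖ ≤ 1) (he1 : e ≠ 1)
    (m : ℕ) : ‖∑ k ∈ range m, e ^ k‖ ≤ 2 / ‖e - 1‖ := by
  rw [geom_sum_eq he1, norm_div]
  gcongr
  calc ‖e ^ m - 1‖ ≤ ‖e‖ ^ m + ‖(1 : K)‖ := by rw [← norm_pow]; exact norm_sub_le _ _
    _ ≤ 2 := by rw [norm_one]; linarith [pow_le_one₀ (norm_nonneg e) he (n := m)]

theorem norm_sum_range_succ_smul_le {R E : Type*} [NormedRing R] [NormedAddCommGroup E]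
    [Module R E] [IsBoundedSMul R E] {f : ℕ → R} {g : ℕ → E} {A : ℝ}
    (hg : ∀ m, ‖∑ i ∈ range m, g i‖ ≤ A) (n : ℕ) :
    ‖∑ i ∈ range (n + 1), f i • g i‖ ≤ (‖f n‖ + ∑ i ∈ range n, ‖f (i + 1) - f i‖) * A := by
  have hA : 0 ≤ A := by simpa using hg 0
  rw [sum_range_by_parts, add_tsub_cancel_right, add_mul, sum_mul]
  refine (norm_sub_le _ _).trans (add_le_add ?_ ((norm_sum_le _ _).trans (sum_le_sum fun i _ ↦ ?_)))
  · exact (norm_smul_le _ _).trans (by gcongr; exact hg _)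
  · exact (norm_smul_le _ _).trans (by gcongr; exact hg _)

theorem Complex.norm_exp_two_pi_I_mul_ofReal (x : ℝ) : ‖exp (2 * Real.pi * I * x)‖ = 1 := by
  rw [norm_exp]
  simp

theorem Complex.exp_two_pi_I_mul_ofReal_ne_one {α : ℝ} (hα : ∀ n : ℤ, α ≠ n) :
    exp (2 * Real.pi * I * α) ≠ 1 := by
  rw [Ne, exp_eq_one_iff]
  rintro ⟨n, hn⟩
  refine hα n (ofReal_injective ?_)
  have h2piI : 2 * (Real.pi : ℂ) * I ≠ 0 := by simp [Real.pi_ne_zero]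
  push_cast
  exact mul_left_cancel₀ h2piI (by rw [hn]; ring)

theorem Complex.norm_sum_range_exp_two_pi_I_mul_le {α : ℝ} (hα : ∀ n : ℤ, α ≠ n) (a : ℤ)
    (m : ℕ) : ‖∑ k ∈ range m, exp (2 * Real.pi * I * ((a + k : ℤ) : ℂ) * α)‖ ≤
      2 / ‖exp (2 * Real.pi * I * α) - 1‖ := by
  have hterm (k : ℕ) : exp (2 * Real.pi * I * ((a + k : ℤ) : ℂ) * α) =
      exp (2 * Real.pi * I * (a * α : ℝ)) * exp (2 * Real.pi * I * α) ^ k := by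
    rw [← exp_nat_mul, ← exp_add]
    push_cast
    ring_nf
  simp_rw [hterm, ← mul_sum, norm_mul, norm_exp_two_pi_I_mul_ofReal, one_mul]
  exact norm_geom_sum_le (norm_exp_two_pi_I_mul_ofReal α).le (exp_two_pi_I_mul_ofReal_ne_one hα) m

theorem partial_sum_bound (α : ℝ) (hα : ∀ n : ℤ, α ≠ n) :
    ∃ c > (0 : ℝ), ∀ N : ℕ, 1 ≤ N → ∀ β : ℂ, β.im ≠ 0 →
      ‖∑ n ∈ Finset.Icc (-(N : ℤ)) (N : ℤ),
          Complex.exp (2 * Real.pi * Complex.I * n * α) / (β + n)‖ ≤ c / |β.im| := by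
  set A := 2 / ‖exp (2 * Real.pi * I * α) - 1‖
  have hA : 0 < A := div_pos two_pos
    (norm_pos_iff.2 (sub_ne_zero.2 (exp_two_pi_I_mul_ofReal_ne_one hα)))
  refine ⟨(1 + Real.pi) * A, by positivity, fun N _ β hβ ↦ ?_⟩
  set z := β - N
  have hzim : z.im = β.im := by simp [z]
  have hz : z.im ≠ 0 := hzim ▸ hβ
  have hcard : (N + 1 - -N : ℤ).toNat = 2 * N + 1 := by omega
  rw [Int.Icc_eq_finset_map, sum_map, hcard]
  calc _ = ‖∑ k ∈ range (2 * N + 1),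
          (z + k)⁻¹ • exp (2 * Real.pi * I * ((-N + k : ℤ) : ℂ) * α)‖ := by
        congr 1
        refine sum_congr rfl fun k _ ↦ ?_
        simp only [Function.Embedding.trans_apply, Nat.castEmbedding_apply, addLeftEmbedding_apply,
          smul_eq_mul, z]
        push_cast
        ring
    _ ≤ (‖(z + (2 * N : ℕ))⁻¹‖ + ∑ k ∈ range (2 * N), ‖(z + (k + 1 : ℕ))⁻¹ - (z + k)⁻¹‖) * A :=
        norm_sum_range_succ_smul_le (norm_sum_range_exp_two_pi_I_mul_le hα _) _
    _ ≤ (|z.im|⁻¹ + Real.pi / |z.im|) * A := by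
        gcongr
        · simpa using norm_inv_le_inv_abs_im (z := z + (2 * N : ℕ)) (by simpa using hz)
        · exact sum_range_norm_inv_add_succ_sub_inv_le hz _
    _ = (1 + Real.pi) * A / |β.im| := by rw [hzim]; ring
end
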